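/- arXiv:1010.6261 — 2 statements merged into one kernel-verified Lean document; each statement's English description precedes it below -/
import Mathlib

section
/- Let π = π₁π₂⋯π_n be a permutation of [n]. Then π is a minimal permutation with d descents if and only if π has exactly d descents and satisfies: (1) π starts and ends with a descent (i.e., 1 and n−1 are descents of π); and (2) whenever i is an ascent of π (π_i < π_{i+1}), one has i ∈ {2,3,…,n−2} and the four consecutive entries π_{i−1}π_iπ_{i+1}π_{i+2} are in the same relative order as 2143 or as 3142. -/
/-- `i` (1-based) is a descent of the word `w`, i.e. `1 ≤ i ≤ w.length - 1` and
`w_i > w_{i+1}` (1-based entries). -/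
def DescentAt (w : List ℕ) (i : ℕ) : Prop :=
  1 ≤ i ∧ i + 1 ≤ w.length ∧ w.getD i 0 < w.getD (i - 1) 0

instance (w : List ℕ) (i : ℕ) : Decidable (DescentAt w i) :=
  inferInstanceAs (Decidable (_ ∧ _ ∧ _))

/-- `i` (1-based) is an ascent of the word `w`. -/
def AscentAt (w : List ℕ) (i : ℕ) : Prop :=
  1 ≤ i ∧ i + 1 ≤ w.length ∧ w.getD (i - 1) 0 < w.getD i 0

instance (w : List ℕ) (i : ℕ) : Decidable (AscentAt w i) :=
  inferInstanceAs (Decidable (_ ∧ _ ∧ _))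

/-- The set of descent positions of `w`. -/
def descents (w : List ℕ) : Finset ℕ :=
  (Finset.range w.length).filter (fun i => DescentAt w i)

/-- `w` is a permutation of `[n] = {1,…,n}`, written as a word. -/
def IsPermWord (n : ℕ) (w : List ℕ) : Prop :=
  w.length = n ∧ w.Nodup ∧ ∀ x ∈ w, 1 ≤ x ∧ x ≤ n

/-- Two words of distinct entries are in the same relative order. -/
def SameRelOrder (u v : List ℕ) : Prop :=
  u.length = v.length ∧
    ∀ p q, p < u.length → q < u.length →
      (u.getD p 0 < u.getD q 0 ↔ v.getD p 0 < v.getD q 0)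

/-- `σ ≺ w`: the word `w` contains the pattern `σ`, i.e. `w` has a subsequence
in the same relative order as `σ`. -/
def ContainsPattern (σ w : List ℕ) : Prop :=
  ∃ s : List ℕ, s.Sublist w ∧ SameRelOrder s σ

/-- `w` is a minimal permutation with `d` descents: it has exactly `d` descents and
no strictly shorter permutation with exactly `d` descents occurs in it as a pattern. -/
def MinimalPerm (d : ℕ) (w : List ℕ) : Prop :=
  (descents w).card = d ∧
    ∀ (m : ℕ) (σ : List ℕ), IsPermWord m σ → m < w.length →
      (descents σ).card = d → ¬ ContainsPattern σ w

/-- `w` is a minimal permutation (with its own number of descents). -/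
def IsMinimal (w : List ℕ) : Prop :=
  MinimalPerm (descents w).card w

/-- The set `𝓕_d(n)` of minimal permutations of length `n` with `d` descents. -/
def minimalPerms (d n : ℕ) : Set (List ℕ) :=
  {w | IsPermWord n w ∧ MinimalPerm d w}

/-- `f_d(n) = |𝓕_d(n)|`. -/
noncomputable def fCount (d n : ℕ) : ℕ :=
  (minimalPerms d n).ncard

/-- `w` has ascent sequence `a`: `w` decomposes into maximal strictly decreasing
runs whose lengths, from left to right, are the entries of `a` (maximality is
expressed by the junctions between consecutive runs being ascents). -/
def HasAscentSeq (w a : List ℕ) : Prop :=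
  ∃ bs : List (List ℕ), bs.flatten = w ∧ bs.map List.length = a ∧
    (∀ b ∈ bs, b ≠ [] ∧ List.Chain' (fun x y => x > y) b) ∧
    List.Chain' (fun b c => ∃ x ∈ b.getLast?, ∃ y ∈ c.head?, x < y) bs

/-- The set `𝓕_{a₁,…,a_k}(n)` of minimal permutations of length `n` with
ascent sequence `a = (a₁,…,a_k)`. -/
def minimalPermsAsc (n : ℕ) (a : List ℕ) : Set (List ℕ) :=
  {w | IsPermWord n w ∧ IsMinimal w ∧ HasAscentSeq w a}

/-- `F_{a₁,…,a_k}(n) = |𝓕_{a₁,…,a_k}(n)|`. -/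
noncomputable def FCount (n : ℕ) (a : List ℕ) : ℕ :=
  (minimalPermsAsc n a).ncard

/-- A standard filling of a given cell set by `1,…,N`: zero off the cells,
a bijection from the cells onto `{1,…,N}`, strictly increasing along rows
(second coordinate) and columns (first coordinate). -/
def IsTableauOn (cell : ℕ → ℕ → Prop) (N : ℕ) (T : ℕ → ℕ → ℕ) : Prop :=
  (∀ r c, ¬ cell r c → T r c = 0) ∧
  (∀ r c, cell r c → 1 ≤ T r c ∧ T r c ≤ N) ∧
  (∀ r c r' c', cell r c → cell r' c' → T r c = T r' c' → r = r' ∧ c = c') ∧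
  (∀ v, 1 ≤ v → v ≤ N → ∃ r c, cell r c ∧ T r c = v) ∧
  (∀ r c, cell r c → cell r (c + 1) → T r c < T r (c + 1)) ∧
  (∀ r c, cell r c → cell (r + 1) c → T r c < T (r + 1) c)

/-- The cells of the skew shape `λ/μ` (rows indexed from `0` downward,
columns from `0` rightward): row `r` contains columns `μ_r ≤ c < λ_r`. -/
def skewCell (l m : List ℕ) (r c : ℕ) : Prop :=
  r < l.length ∧ m.getD r 0 ≤ c ∧ c < l.getD r 0

/-- A standard skew Young tableau of shape `λ/μ`. -/
def IsSkewSYT (l m : List ℕ) (T : ℕ → ℕ → ℕ) : Prop :=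
  IsTableauOn (skewCell l m) (l.sum - m.sum) T

/-- `f^{λ/μ}`, the number of standard skew Young tableaux of shape `λ/μ`. -/
noncomputable def skewSYTCount (l m : List ℕ) : ℕ :=
  Nat.card {T : ℕ → ℕ → ℕ // IsSkewSYT l m T}

/-- The row index of the top cell of column `c` in the 2-regular skew shape
with column lengths `a₁,…,a_k` (columns normalized so that the last column
starts in row `0`; consecutive columns overlap in exactly two rows). -/
def colTop (a : List ℕ) (c : ℕ) : ℕ :=
  (a.drop (c + 1)).sum - 2 * (a.length - 1 - c)

/-- The cells of the 2-regular skew shape with column lengths `a₁,…,a_k`: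
column `c` occupies the `a_c` rows starting at `colTop a c`, so that any two
consecutive columns overlap in exactly two rows. -/
def twoRegCell (a : List ℕ) (r c : ℕ) : Prop :=
  c < a.length ∧ colTop a c ≤ r ∧ r < colTop a c + a.getD c 0

/-- A 2-regular skew tableau with column lengths `a₁,…,a_k`: a standard filling
of the 2-regular skew shape by `1,…,a₁+⋯+a_k`. -/
def Is2RegularTableau (a : List ℕ) (T : ℕ → ℕ → ℕ) : Prop :=
  IsTableauOn (twoRegCell a) a.sum T

/-- `𝓜_{2n+1,2i}`: minimal permutations of length `2n+1` with `n+1` descents whose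
unique pair of consecutive descents is `(2i-1, 2i)`. -/
def Mset (n i : ℕ) : Set (List ℕ) :=
  {w | IsPermWord (2 * n + 1) w ∧ MinimalPerm (n + 1) w ∧
    DescentAt w (2 * i - 1) ∧ DescentAt w (2 * i) ∧
    ∀ j, DescentAt w j → DescentAt w (j + 1) → j = 2 * i - 1}

/-- Elementary Knuth transformations on words of distinct integers. -/
inductive KnuthStep : List ℕ → List ℕ → Prop
  | k1 (u v : List ℕ) (x y z : ℕ) (hxy : x < y) (hyz : y < z) :
      KnuthStep (u ++ [x, z, y] ++ v) (u ++ [z, x, y] ++ v)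
  | k2 (u v : List ℕ) (x y z : ℕ) (hxy : x < y) (hyz : y < z) :
      KnuthStep (u ++ [y, x, z] ++ v) (u ++ [y, z, x] ++ v)

/-- Knuth equivalence of words. -/
def KnuthEquiv : List ℕ → List ℕ → Prop := Relation.EqvGen KnuthStep

/-! Deleting an entry never increases the number of descents, and any occurrence of a shorter
pattern is a subsequence of a word obtained from `w` by deleting a single entry; conversely every
such deletion standardizes to a shorter permutation contained in `w`. So `w` is minimal exactly
when every one-entry deletion strictly lowers the descent count. Deleting `b` from a factor
`a b c` changes the count by `[b < a] + [c < b] - [c < a]`, and deleting an end entry by the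
descent at that end. Asking for a positive drop at every position says that `w` starts and ends
with a descent and that every ascent `b < c` of `w` sits in a factor `a b c e` with
`b < a < c` and `b < e < c`, that is, of type `2143` or `3142`. -/

def desCount : List ℕ → ℕ
  | x :: y :: t => (if y < x then 1 else 0) + desCount (y :: t)
  | _ => 0

-- `none` stands for the missing neighbour beyond an end of the word.
def optDescent : Option ℕ → Option ℕ → ℕ
  | some x, some y => if y < x then 1 else 0
  | _, _ => 0

@[simp] lemma optDescent_none_left (b : Option ℕ) : optDescent none b = 0 := by
  cases b <;> rfl

@[simp] lemma optDescent_none_right (a : Option ℕ) : optDescent a none = 0 := by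
  cases a <;> rfl

@[simp] lemma optDescent_some_some (x y : ℕ) :
    optDescent (some x) (some y) = if y < x then 1 else 0 := rfl

lemma optDescent_le_add (a b : Option ℕ) (x : ℕ) :
    optDescent a b ≤ optDescent a (some x) + optDescent (some x) b := by
  cases a <;> cases b <;> simp only [optDescent_none_left, optDescent_none_right,
    optDescent_some_some] <;> (try split_ifs) <;> omega

lemma desCount_cons (x : ℕ) (l : List ℕ) :
    desCount (x :: l) = optDescent (some x) l.head? + desCount l := by
  cases l <;> simp [desCount]

lemma desCount_append (u v : List ℕ) :
    desCount (u ++ v) = desCount u + optDescent u.getLast? v.head? + desCount v := by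
  induction u with
  | nil => simp [desCount]
  | cons x u ih =>
    cases u with
    | nil => simp [desCount_cons, desCount]
    | cons y t =>
      rw [List.cons_append, desCount_cons, ih, desCount_cons x, List.getLast?_cons_cons]
      simp only [List.cons_append, List.head?_cons]
      omega

-- Carrying the left neighbour `a` is what lets the induction on the sublist go through.
lemma List.Sublist.optDescent_add_desCount_le {s w : List ℕ} (h : s.Sublist w) (a : Option ℕ) :
    optDescent a s.head? + desCount s ≤ optDescent a w.head? + desCount w := by
  induction h generalizing a with
  | slnil => rfl
  | @cons s w b _ ih =>
    have := ih a
    have := optDescent_le_add a w.head? b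
    rw [desCount_cons, List.head?_cons]
    omega
  | @cons_cons s w b _ ih =>
    have := ih (some b)
    simp only [desCount_cons, List.head?_cons]
    omega

lemma List.Sublist.desCount_le {s w : List ℕ} (h : s.Sublist w) : desCount s ≤ desCount w := by
  simpa using h.optDescent_add_desCount_le none

lemma card_descents_eq_sum (w : List ℕ) : (descents w).card =
    ∑ j ∈ Finset.range (w.length - 1), if w.getD (j + 1) 0 < w.getD j 0 then 1 else 0 := by
  rw [descents, Finset.card_filter]
  cases hlen : w.length with
  | zero => rfl
  | succ m =>
    rw [Finset.sum_range_succ', Nat.add_sub_cancel]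
    simp only [DescentAt, Nat.le_zero, one_ne_zero, false_and, if_false, add_zero]
    refine Finset.sum_congr rfl fun j hj => ?_
    simp only [Finset.mem_range] at hj
    simp only [Nat.le_add_left, Nat.add_sub_cancel, true_and, hlen, show j + 1 + 1 ≤ m + 1 by omega]

lemma sum_descentIndicator_eq_desCount : ∀ w : List ℕ,
    ∑ j ∈ Finset.range (w.length - 1), (if w.getD (j + 1) 0 < w.getD j 0 then 1 else 0) =
      desCount w
  | [] | [_] => rfl
  | x :: y :: t => by
    rw [desCount, ← sum_descentIndicator_eq_desCount (y :: t)]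
    rw [List.length_cons, List.length_cons, Nat.add_sub_cancel, Finset.sum_range_succ']
    simp only [List.getD_cons_succ, List.getD_cons_zero, Nat.add_sub_cancel]
    omega

lemma card_descents_eq_desCount (w : List ℕ) : (descents w).card = desCount w := by
  rw [card_descents_eq_sum, sum_descentIndicator_eq_desCount]

lemma descents_eq_of_sameRelOrder {s t : List ℕ} (h : SameRelOrder s t) :
    descents s = descents t := by
  obtain ⟨hlen, hlt⟩ := h
  rw [descents, descents, ← hlen]
  refine Finset.filter_congr fun i _ => ?_
  simp only [DescentAt, ← hlen]
  exact and_congr_right fun _ => and_congr_right fun _ => hlt i (i - 1) (by omega) (by omega)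

lemma sameRelOrder_map {s : List ℕ} {f : ℕ → ℕ} (hf : StrictMonoOn f {x | x ∈ s}) :
    SameRelOrder s (s.map f) := by
  refine ⟨(List.length_map _).symm, fun p q hp hq => ?_⟩
  simp only [List.getD_eq_getElem?_getD, List.getElem?_map, List.getElem?_eq_getElem hp,
    List.getElem?_eq_getElem hq, Option.map_some, Option.getD_some]
  exact (hf.lt_iff_lt (List.getElem_mem hp) (List.getElem_mem hq)).symm

def rankIn (A : Finset ℕ) (x : ℕ) : ℕ := (A.filter (· ≤ x)).card

lemma strictMonoOn_rankIn (A : Finset ℕ) : StrictMonoOn (rankIn A) A := by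
  intro x _ y hy hxy
  refine Finset.card_lt_card ⟨fun z hz => ?_, fun hsub => ?_⟩
  · simp only [Finset.mem_filter] at hz ⊢
    exact ⟨hz.1, hz.2.trans hxy.le⟩
  have := Finset.mem_filter.1 (hsub (Finset.mem_filter.2 ⟨hy, le_rfl⟩))
  omega

lemma rankIn_mem_Icc {A : Finset ℕ} {x : ℕ} (hx : x ∈ A) : rankIn A x ∈ Finset.Icc 1 A.card :=
  Finset.mem_Icc.2 ⟨Finset.card_pos.2 ⟨x, Finset.mem_filter.2 ⟨hx, le_rfl⟩⟩,
    Finset.card_filter_le _ _⟩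

lemma exists_isPermWord_sameRelOrder {s : List ℕ} (hs : s.Nodup) :
    ∃ σ, IsPermWord s.length σ ∧ SameRelOrder s σ := by
  have hmono : StrictMonoOn (rankIn s.toFinset) {x | x ∈ s} := by
    simpa using strictMonoOn_rankIn s.toFinset
  refine ⟨s.map (rankIn s.toFinset), ⟨List.length_map _, ?_, ?_⟩, sameRelOrder_map hmono⟩
  · exact hs.map_on fun x hx y hy => hmono.injOn hx hy
  · intro y hy
    obtain ⟨x, hx, rfl⟩ := List.mem_map.1 hy
    rw [← List.toFinset_card_of_nodup hs, ← Finset.mem_Icc]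
    exact rankIn_mem_Icc (List.mem_toFinset.2 hx)

lemma List.Sublist.exists_sublist_eraseIdx {α : Type*} {s w : List α} (h : s.Sublist w)
    (hlen : s.length < w.length) : ∃ k < w.length, s.Sublist (w.eraseIdx k) := by
  induction h with
  | slnil => simp at hlen
  | cons a h _ => exact ⟨0, by simp, by simpa using h⟩
  | cons_cons a h ih =>
    obtain ⟨k, hk, hsub⟩ := ih (by simpa using hlen)
    exact ⟨k + 1, by simpa using hk, hsub.cons_cons a⟩

lemma minimalPerm_iff_forall_desCount_eraseIdx_lt {d : ℕ} {w : List ℕ} (hw : w.Nodup) :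
    MinimalPerm d w ↔ desCount w = d ∧ ∀ k < w.length, desCount (w.eraseIdx k) < desCount w := by
  rw [MinimalPerm, card_descents_eq_desCount]
  refine and_congr_right fun hd => ⟨fun hmin k hk => ?_, ?_⟩
  · obtain ⟨σ, hσ, hsσ⟩ := exists_isPermWord_sameRelOrder (hw.sublist (w.eraseIdx_sublist k))
    have hle := (w.eraseIdx_sublist k).desCount_le
    by_contra hlt
    refine hmin _ σ hσ (by rw [List.length_eraseIdx_of_lt hk]; omega) ?_
      ⟨_, w.eraseIdx_sublist k, hsσ⟩
    rw [← descents_eq_of_sameRelOrder hsσ, card_descents_eq_desCount]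
    omega
  · rintro hdel m σ hσ hm hσd ⟨s, hsw, hsσ⟩
    obtain ⟨k, hk, hsk⟩ := hsw.exists_sublist_eraseIdx (by rw [hsσ.1, hσ.1]; exact hm)
    rw [← descents_eq_of_sameRelOrder hsσ, card_descents_eq_desCount] at hσd
    have := hsk.desCount_le
    have := hdel k hk
    omega

lemma desCount_eraseIdx_zero_lt_iff (w : List ℕ) :
    desCount (w.eraseIdx 0) < desCount w ↔ DescentAt w 1 := by
  match w with
  | [] | [_] => simp [desCount, DescentAt]
  | x :: y :: t => by_cases y < x <;> simp [desCount, DescentAt, *]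

lemma desCount_eraseIdx_length_sub_one_lt_iff (w : List ℕ) :
    desCount (w.eraseIdx (w.length - 1)) < desCount w ↔ DescentAt w (w.length - 1) := by
  rw [List.eraseIdx_length_sub_one]
  rcases w.eq_nil_or_concat with rfl | ⟨u, x, rfl⟩
  · simp [desCount, DescentAt]
  rcases u.eq_nil_or_concat with rfl | ⟨v, y, rfl⟩
  · simp [desCount, DescentAt]
  by_cases x < y <;> simp [desCount_append, desCount, DescentAt, *]

lemma desCount_eraseIdx_succ_lt_iff {w : List ℕ} (hw : w.Nodup) {k : ℕ}
    (hk : k + 2 < w.length) :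
    desCount (w.eraseIdx (k + 1)) < desCount w ↔
      (w.getD k 0 < w.getD (k + 1) 0 →
        w.getD (k + 2) 0 < w.getD (k + 1) 0 ∧ w.getD k 0 < w.getD (k + 2) 0) ∧
      (w.getD (k + 1) 0 < w.getD (k + 2) 0 →
        w.getD (k + 1) 0 < w.getD k 0 ∧ w.getD k 0 < w.getD (k + 2) 0) := by
  obtain ⟨u, a, b, c, v, rfl, rfl⟩ : ∃ u a b c v, w = u ++ a :: b :: c :: v ∧ u.length = k := by
    refine ⟨w.take k, w[k], w[k + 1], w[k + 2], w.drop (k + 3), ?_,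
      List.length_take_of_le (by omega)⟩
    rw [← List.drop_eq_getElem_cons, ← List.drop_eq_getElem_cons, ← List.drop_eq_getElem_cons,
      List.take_append_drop]
  rw [List.eraseIdx_append_of_length_le (by omega)]
  have hab : a ≠ b := by rintro rfl; simp [List.nodup_append] at hw
  have hac : a ≠ c := by rintro rfl; simp [List.nodup_append] at hw
  have hbc : b ≠ c := by rintro rfl; simp [List.nodup_append] at hw
  simp only [List.getD_append_right _ _ _ _ (Nat.le_add_right _ _),
    List.getD_append_right _ _ _ u.length le_rfl, Nat.sub_self, Nat.add_sub_cancel_left,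
    List.getD_cons_zero, List.getD_cons_succ, List.eraseIdx_cons_succ,
    List.eraseIdx_cons_zero, desCount_append, List.head?_cons, desCount, add_lt_add_iff_left]
  split_ifs <;> omega

lemma forall_desCount_eraseIdx_lt_iff {w : List ℕ} (hw : w ≠ []) :
    (∀ k < w.length, desCount (w.eraseIdx k) < desCount w) ↔
      DescentAt w 1 ∧ DescentAt w (w.length - 1) ∧
        ∀ k, k + 2 < w.length → desCount (w.eraseIdx (k + 1)) < desCount w := by
  have hlen : 0 < w.length := List.length_pos_iff.2 hw
  rw [← desCount_eraseIdx_zero_lt_iff, ← desCount_eraseIdx_length_sub_one_lt_iff]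
  refine ⟨fun h => ⟨h 0 hlen, h _ (by omega), fun k hk => h _ (by omega)⟩,
    fun ⟨h0, hlast, hmid⟩ k hk => ?_⟩
  rcases k with _ | k
  · exact h0
  · rcases Nat.lt_or_ge (k + 2) w.length with h | h
    · exact hmid k h
    · rwa [show k + 1 = w.length - 1 by omega]

lemma List.Nodup.getD_ne_getD {w : List ℕ} (hw : w.Nodup) {i j : ℕ} (hi : i < w.length)
    (hj : j < w.length) (hij : i ≠ j) : w.getD i 0 ≠ w.getD j 0 := by
  rw [List.getD_eq_getElem _ 0 hi, List.getD_eq_getElem _ 0 hj]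
  exact fun h => hij (hw.getElem_inj_iff.1 h)

lemma sameRelOrder_2143_or_3142_iff {a b c e : ℕ} (hae : a ≠ e) :
    (SameRelOrder [a, b, c, e] [2, 1, 4, 3] ∨ SameRelOrder [a, b, c, e] [3, 1, 4, 2]) ↔
      b < a ∧ a < c ∧ b < e ∧ e < c := by
  constructor
  · rintro (⟨-, h⟩ | ⟨-, h⟩) <;>
      exact ⟨by simpa using (h 1 0 (by simp) (by simp)).2 (by decide),
        by simpa using (h 0 2 (by simp) (by simp)).2 (by decide),
        by simpa using (h 1 3 (by simp) (by simp)).2 (by decide),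
        by simpa using (h 3 2 (by simp) (by simp)).2 (by decide)⟩
  · intro h
    refine hae.lt_or_gt.imp (fun hlt => ⟨rfl, ?_⟩) (fun hlt => ⟨rfl, ?_⟩)
    all_goals
      intro p q hp hq
      simp only [List.length_cons, List.length_nil] at hp hq
      interval_cases p <;> interval_cases q <;>
        simp only [List.getD_cons_succ, List.getD_cons_zero] <;> omega

lemma forall_desCount_eraseIdx_succ_lt_iff {w : List ℕ} (hw : w.Nodup) (h1 : DescentAt w 1)
    (hlast : DescentAt w (w.length - 1)) :
    (∀ k, k + 2 < w.length → desCount (w.eraseIdx (k + 1)) < desCount w) ↔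
      ∀ i, AscentAt w i →
        2 ≤ i ∧ i ≤ w.length - 2 ∧
          (SameRelOrder
              [w.getD (i - 2) 0, w.getD (i - 1) 0, w.getD i 0, w.getD (i + 1) 0] [2, 1, 4, 3] ∨
            SameRelOrder
              [w.getD (i - 2) 0, w.getD (i - 1) 0, w.getD i 0, w.getD (i + 1) 0] [3, 1, 4, 2]) := by
  obtain ⟨-, hlen, hdesc1⟩ := h1
  obtain ⟨-, -, hdescl⟩ := hlast
  constructor
  · rintro hdel i ⟨hi, hilen, hasc⟩
    have hi1 : i ≠ 1 := by rintro rfl; exact lt_asymm hdesc1 hasc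
    have hil : i ≠ w.length - 1 := by rintro rfl; exact lt_asymm hdescl hasc
    obtain ⟨j, rfl⟩ : ∃ j, i = j + 2 := ⟨i - 2, by omega⟩
    have hj : j + 3 < w.length := by omega
    have hl := (desCount_eraseIdx_succ_lt_iff hw (k := j) (by omega)).1 (hdel j (by omega))
    have hr := (desCount_eraseIdx_succ_lt_iff hw (k := j + 1) (by omega)).1 (hdel (j + 1) hj)
    simp only [show j + 2 - 1 = j + 1 by omega, show j + 1 + 1 = j + 2 by omega,
      show j + 1 + 2 = j + 3 by omega] at hasc hr ⊢
    refine ⟨by omega, by omega, (sameRelOrder_2143_or_3142_iff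
      (hw.getD_ne_getD (by omega) (by omega) (by omega))).2
        ⟨(hl.2 hasc).1, (hl.2 hasc).2, (hr.1 hasc).2, (hr.1 hasc).1⟩⟩
  · intro hasc k hk
    rw [desCount_eraseIdx_succ_lt_iff hw hk]
    refine ⟨fun hab => ?_, fun hbc => ?_⟩
    · obtain ⟨hk1, -, hquad⟩ := hasc (k + 1) ⟨by omega, by omega, by simpa using hab⟩
      obtain ⟨m, rfl⟩ : ∃ m, k = m + 1 := ⟨k - 1, by omega⟩
      simp only [show m + 1 + 1 - 2 = m by omega, show m + 1 + 1 - 1 = m + 1 by omega,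
        show m + 1 + 1 + 1 = m + 3 by omega] at hquad ⊢
      obtain ⟨-, -, hBE, hEC⟩ := (sameRelOrder_2143_or_3142_iff
        (hw.getD_ne_getD (by omega) (by omega) (by omega))).1 hquad
      exact ⟨hEC, hBE⟩
    · obtain ⟨-, hk2, hquad⟩ := hasc (k + 2) ⟨by omega, by omega, by simpa using hbc⟩
      simp only [show k + 2 - 2 = k by omega, show k + 2 - 1 = k + 1 by omega] at hquad
      obtain ⟨hBA, hAC, -, -⟩ := (sameRelOrder_2143_or_3142_iff
        (hw.getD_ne_getD (by omega) (by omega) (by omega))).1 hquad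
      exact ⟨hBA, hAC⟩

/-- Bouvel–Pergola characterization: a permutation `w` of `[n]` is a
minimal permutation with `d` descents iff it has exactly `d` descents, starts and ends
with a descent, and every ascent `i` satisfies `2 ≤ i ≤ n-2` with the four consecutive
entries `w_{i-1} w_i w_{i+1} w_{i+2}` of type `2143` or `3142`. -/
theorem minimalPerm_characterization (n d : ℕ) (hd : 1 ≤ d) (w : List ℕ)
    (hw : IsPermWord n w) :
    MinimalPerm d w ↔
      (descents w).card = d ∧ DescentAt w 1 ∧ DescentAt w (n - 1) ∧
        ∀ i, AscentAt w i →
          2 ≤ i ∧ i ≤ n - 2 ∧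
            (SameRelOrder
                [w.getD (i - 2) 0, w.getD (i - 1) 0, w.getD i 0, w.getD (i + 1) 0]
                [2, 1, 4, 3] ∨
              SameRelOrder
                [w.getD (i - 2) 0, w.getD (i - 1) 0, w.getD i 0, w.getD (i + 1) 0]
                [3, 1, 4, 2]) := by
  obtain ⟨rfl, hnd, -⟩ := hw
  rw [minimalPerm_iff_forall_desCount_eraseIdx_lt hnd, card_descents_eq_desCount]
  refine and_congr_right fun hdw => ?_
  have hne : w ≠ [] := by
    rintro rfl
    simp only [desCount] at hdw
    omega
  rw [forall_desCount_eraseIdx_lt_iff hne]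
  exact and_congr_right fun h1 => and_congr_right fun hlast =>
    forall_desCount_eraseIdx_succ_lt_iff hnd h1 hlast
end

section
/- For n ≥ 4 and 2 ≤ k ≤ n − 2, the number of minimal permutations of length n with ascent sequence (k, n−k) equals binom(n, k) − n, i.e., F_{k,n−k}(n) = binom(n, k) − n. -/
/-! A permutation with ascent sequence `(k, n - k)` is `dec(A) dec([n] \ A)` for the set `A` of its
first `k` entries, and it has `n - 2` descents. A permutation with `n - 2` descents on fewer than
`n` letters has exactly `n - 1` letters and is decreasing, so the word is minimal iff it has no
decreasing subsequence of length `n - 1`. Such a subsequence consists of a part of `A` lying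
entirely above a part of `[n] \ A`, the two together missing a single letter; this happens for
exactly `n` of the `k`-sets `A` (`IsNearTop`), which are counted by inclusion–exclusion. For the
remaining sets the two runs automatically meet in an ascent. -/

open Finset

theorem List.Pairwise.sort_toFinset_ge {l : List ℕ} (hl : l.Pairwise (· > ·)) :
    l.toFinset.sort (· ≥ ·) = l :=
  (List.toFinset_sort _ (hl.imp ne_of_gt)).mpr (hl.imp le_of_lt)

theorem Finset.sort_ge_sublist_of_subset {A B : Finset ℕ} (h : A ⊆ B) :
    (A.sort (· ≥ ·)).Sublist (B.sort (· ≥ ·)) := by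
  have hA : ((B.sort (· ≥ ·)).filter (· ∈ A)).toFinset = A := by
    ext x
    simpa using fun hx => h hx
  rw [← hA, ((B.sortedGT_sort.pairwise).filter _).sort_toFinset_ge]
  exact List.filter_sublist

theorem Finset.pairwise_gt_sort_append_sort_iff {A B : Finset ℕ} :
    (A.sort (· ≥ ·) ++ B.sort (· ≥ ·)).Pairwise (· > ·) ↔ ∀ x ∈ A, ∀ y ∈ B, y < x := by
  simp [List.pairwise_append, A.sortedGT_sort.pairwise, B.sortedGT_sort.pairwise]

theorem not_descentAt_zero (w : List ℕ) : ¬ DescentAt w 0 :=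
  fun h => absurd h.1 (by omega)

theorem descentAt_succ_iff {w : List ℕ} {i : ℕ} :
    DescentAt w (i + 1) ↔ ∃ h : i + 1 < w.length, w[i + 1] < w[i] := by
  constructor
  · rintro ⟨-, hi, hlt⟩
    refine ⟨hi, ?_⟩
    rwa [List.getD_eq_getElem _ _ hi, Nat.add_sub_cancel,
      List.getD_eq_getElem _ _ (by omega)] at hlt
  · rintro ⟨hi, hlt⟩
    refine ⟨by omega, hi, ?_⟩
    rwa [List.getD_eq_getElem _ _ hi, Nat.add_sub_cancel,
      List.getD_eq_getElem _ _ (by omega)]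

theorem mem_descents {w : List ℕ} {i : ℕ} : i ∈ descents w ↔ DescentAt w i := by
  simp only [descents, mem_filter, mem_range, and_iff_right_iff_imp]
  exact fun h => by have := h.2.1; omega

theorem descents_subset_Icc (w : List ℕ) : descents w ⊆ Icc 1 (w.length - 1) := by
  intro i hi
  have h := mem_descents.mp hi
  have := h.1; have := h.2.1
  rw [mem_Icc]; omega

theorem card_descents_le (w : List ℕ) : (descents w).card ≤ w.length - 1 := by
  simpa using card_le_card (descents_subset_Icc w)

theorem descents_eq_Icc_iff {w : List ℕ} :
    descents w = Icc 1 (w.length - 1) ↔ w.IsChain (· > ·) := by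
  rw [List.isChain_iff_getElem]
  constructor
  · intro h i hi
    have hi' : i + 1 ∈ descents w := by rw [h, mem_Icc]; omega
    exact (descentAt_succ_iff.mp (mem_descents.mp hi')).2
  · intro h
    refine (descents_subset_Icc w).antisymm fun i hi => ?_
    obtain ⟨j, rfl⟩ : ∃ j, i = j + 1 := ⟨i - 1, by rw [mem_Icc] at hi; omega⟩
    have hj : j + 1 < w.length := by rw [mem_Icc] at hi; omega
    exact mem_descents.mpr (descentAt_succ_iff.mpr ⟨hj, h j hj⟩)

theorem isChain_gt_of_card_descents {w : List ℕ} (h : (descents w).card = w.length - 1) :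
    w.IsChain (· > ·) :=
  descents_eq_Icc_iff.mp <| eq_of_subset_of_card_le (descents_subset_Icc w) (by simp [h])

theorem card_descents_of_isChain_gt {w : List ℕ} (h : w.IsChain (· > ·)) :
    (descents w).card = w.length - 1 := by
  simp [descents_eq_Icc_iff.mpr h]

theorem descents_append_of_isChain_gt {u v : List ℕ} (hu : u.IsChain (· > ·))
    (hv : v.IsChain (· > ·)) (hj : ∃ x ∈ u.getLast?, ∃ y ∈ v.head?, x < y) :
    descents (u ++ v) = (Icc 1 (u.length + v.length - 1)).erase u.length := by
  obtain ⟨x, hx, y, hy, hxy⟩ := hj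
  rw [List.isChain_iff_getElem] at hu hv
  ext i
  rcases i with _ | i
  · simp [not_descentAt_zero, mem_descents]
  rw [mem_descents, descentAt_succ_iff, mem_erase, mem_Icc]
  rw [List.getLast?_eq_getElem?, Option.mem_def, List.getElem?_eq_some_iff] at hx
  rw [List.head?_eq_getElem?, Option.mem_def, List.getElem?_eq_some_iff] at hy
  obtain ⟨hxl, rfl⟩ := hx
  obtain ⟨hyl, rfl⟩ := hy
  rcases lt_trichotomy (i + 1) u.length with h | h | h
  · simp only [List.getElem_append_left h, List.getElem_append_left (Nat.lt_of_succ_lt h)]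
    exact ⟨fun _ => ⟨h.ne, by omega, by omega⟩,
      fun _ => ⟨by rw [List.length_append]; omega, hu i h⟩⟩
  · have hi : i < u.length := by omega
    simp only [List.getElem_append_left hi, List.getElem_append_right h.ge]
    simp only [show i + 1 - u.length = 0 by omega]
    simp only [show u.length - 1 = i by omega] at hxy
    exact ⟨fun ⟨_, hlt⟩ => absurd hxy (not_lt.mpr hlt.le), fun h' => absurd h h'.1⟩
  · simp only [List.getElem_append_right h.le,
      List.getElem_append_right (Nat.le_of_lt_succ h)]
    constructor
    · rintro ⟨hl, -⟩
      rw [List.length_append] at hl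
      omega
    · rintro ⟨-, -, hl⟩
      have hj : i - u.length + 1 < v.length := by omega
      refine ⟨by rw [List.length_append]; omega, ?_⟩
      have := hv (i - u.length) hj
      simpa only [show i - u.length + 1 = i + 1 - u.length by omega] using this

theorem card_descents_append_of_isChain_gt {u v : List ℕ} (hu : u.IsChain (· > ·))
    (hv : v.IsChain (· > ·)) (hj : ∃ x ∈ u.getLast?, ∃ y ∈ v.head?, x < y) :
    (descents (u ++ v)).card + 2 = (u ++ v).length := by
  obtain ⟨x, hx, y, hy, -⟩ := id hj
  have hu0 : u ≠ [] := by rintro rfl; simp at hx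
  have hv0 : v ≠ [] := by rintro rfl; simp at hy
  have := List.length_pos_iff.mpr hu0
  have := List.length_pos_iff.mpr hv0
  rw [descents_append_of_isChain_gt hu hv hj, card_erase_of_mem (by rw [mem_Icc]; omega),
    Nat.card_Icc, List.length_append]
  omega

theorem getD_lt_getD_iff_of_pairwise_gt {l : List ℕ} (hl : l.Pairwise (· > ·)) {p q : ℕ}
    (hp : p < l.length) (hq : q < l.length) : l.getD p 0 < l.getD q 0 ↔ q < p := by
  rw [List.getD_eq_getElem _ _ hp, List.getD_eq_getElem _ _ hq]
  simpa using StrictAnti.lt_iff_gt hl.sortedGT (a := ⟨p, hp⟩) (b := ⟨q, hq⟩)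

theorem sameRelOrder_of_pairwise_gt {s σ : List ℕ} (hs : s.Pairwise (· > ·))
    (hσ : σ.Pairwise (· > ·)) (hl : s.length = σ.length) : SameRelOrder s σ :=
  ⟨hl, fun p q hp hq => by
    rw [getD_lt_getD_iff_of_pairwise_gt hs hp hq,
      getD_lt_getD_iff_of_pairwise_gt hσ (hl ▸ hp) (hl ▸ hq)]⟩

theorem SameRelOrder.pairwise_gt {s σ : List ℕ} (h : SameRelOrder s σ)
    (hσ : σ.Pairwise (· > ·)) : s.Pairwise (· > ·) := by
  refine List.pairwise_iff_getElem.mpr fun i j hi hj hij => ?_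
  have := (h.2 j i hj hi).mpr <|
    (getD_lt_getD_iff_of_pairwise_gt hσ (h.1 ▸ hj) (h.1 ▸ hi)).mpr hij
  rwa [List.getD_eq_getElem _ _ hj, List.getD_eq_getElem _ _ hi] at this

theorem isPermWord_sort_Icc_ge (m : ℕ) : IsPermWord m ((Icc 1 m).sort (· ≥ ·)) :=
  ⟨by simp, sort_nodup _ _, fun x hx => by simpa using hx⟩

theorem isMinimal_iff_forall_sublist {w : List ℕ} (hw : (descents w).card + 2 = w.length)
    (h3 : 3 ≤ w.length) :
    IsMinimal w ↔ ∀ s : List ℕ, s.Sublist w → s.Pairwise (· > ·) → s.length ≠ w.length - 1 := by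
  simp only [IsMinimal, MinimalPerm, true_and, ContainsPattern]
  constructor
  · intro hmin s hs hdec hlen
    have hσ := isPermWord_sort_Icc_ge (w.length - 1)
    refine hmin _ _ hσ (by omega) ?_ ⟨s, hs, sameRelOrder_of_pairwise_gt hdec
      (sortedGT_sort _).pairwise (by rw [hσ.1]; omega)⟩
    rw [card_descents_of_isChain_gt (sortedGT_sort _).pairwise.isChain, hσ.1]
    omega
  · rintro hno m σ hσ hm hd ⟨s, hs, hrel⟩
    have hle := card_descents_le σ
    have := hσ.1
    have hσdec : σ.Pairwise (· > ·) :=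
      List.isChain_iff_pairwise.mp (isChain_gt_of_card_descents (w := σ) (by omega))
    exact hno s hs (hrel.pairwise_gt hσdec) (by rw [hrel.1]; omega)

theorem exists_sublist_sort_append_sort_iff (X Y : Finset ℕ) (L : ℕ) :
    (∃ s : List ℕ, s.Sublist (X.sort (· ≥ ·) ++ Y.sort (· ≥ ·)) ∧ s.Pairwise (· > ·) ∧
      s.length = L) ↔
    ∃ S ⊆ X, ∃ T ⊆ Y, (∀ x ∈ S, ∀ y ∈ T, y < x) ∧ S.card + T.card = L := by
  constructor
  · rintro ⟨s, hs, hdec, rfl⟩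
    obtain ⟨s₁, s₂, rfl, h₁, h₂⟩ := List.sublist_append_iff.mp hs
    obtain ⟨hd₁, hd₂, hsep⟩ := List.pairwise_append.mp hdec
    refine ⟨s₁.toFinset, fun x hx => ?_, s₂.toFinset, fun x hx => ?_,
      fun x hx y hy => hsep x (List.mem_toFinset.mp hx) y (List.mem_toFinset.mp hy), ?_⟩
    · simpa using h₁.subset (List.mem_toFinset.mp hx)
    · simpa using h₂.subset (List.mem_toFinset.mp hx)
    · rw [List.toFinset_card_of_nodup (hd₁.imp ne_of_gt),
        List.toFinset_card_of_nodup (hd₂.imp ne_of_gt), List.length_append]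
  · rintro ⟨S, hS, T, hT, hsep, rfl⟩
    exact ⟨S.sort (· ≥ ·) ++ T.sort (· ≥ ·),
      (sort_ge_sublist_of_subset hS).append (sort_ge_sublist_of_subset hT),
      pairwise_gt_sort_append_sort_iff.mpr hsep, by simp⟩

/-- For a `k`-subset `A` of `[n]`: `A` is the top `k`-set `{n-k+1, …, n}`, possibly with one of its
elements replaced by `n - k`, or with `n - k + 1` replaced by a smaller number. -/
def IsNearTop (n k : ℕ) (A : Finset ℕ) : Prop :=
  A ⊆ Icc (n - k) n ∨ Icc (n - k + 2) n ⊆ A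

instance (n k : ℕ) : DecidablePred (IsNearTop n k) :=
  fun _ => inferInstanceAs (Decidable (_ ∨ _))

section NearTop

variable {n : ℕ} {A : Finset ℕ}

theorem card_Icc_sdiff (hA : A ⊆ Icc 1 n) : (Icc 1 n \ A).card = n - A.card := by
  rw [card_sdiff_of_subset hA, Nat.card_Icc, Nat.add_sub_cancel]

theorem exists_separated_of_isNearTop (hA : A ⊆ Icc 1 n) (hk : 1 ≤ A.card) (hkn : A.card < n)
    (h : IsNearTop n A.card A) :
    ∃ S ⊆ A, ∃ T ⊆ Icc 1 n \ A, (∀ x ∈ S, ∀ y ∈ T, y < x) ∧ S.card + T.card = n - 1 := by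
  rcases h with htop | hbot
  · refine ⟨A, subset_rfl, Icc 1 (n - A.card - 1), fun y hy => ?_, fun x hx y hy => ?_, ?_⟩
    · have hy := mem_Icc.mp hy
      refine mem_sdiff.mpr ⟨mem_Icc.mpr ⟨hy.1, by omega⟩, fun hyA => ?_⟩
      have := mem_Icc.mp (htop hyA)
      omega
    · have := mem_Icc.mp (htop hx)
      have := mem_Icc.mp hy
      omega
    · simp only [Nat.card_Icc]
      omega
  · refine ⟨Icc (n - A.card + 2) n, hbot, Icc 1 n \ A, subset_rfl, fun x hx y hy => ?_, ?_⟩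
    · obtain ⟨hy, hyA⟩ := mem_sdiff.mp hy
      have hx := mem_Icc.mp hx
      have hy := mem_Icc.mp hy
      by_contra hxy
      exact hyA (hbot (mem_Icc.mpr ⟨by omega, hy.2⟩))
    · rw [card_Icc_sdiff hA, Nat.card_Icc]
      omega

/-- Of two separated sets covering all but one element of `[n]`, one is all of `A` or all of its
complement; each alternative pins `A` near the top. -/
theorem isNearTop_of_separated (hA : A ⊆ Icc 1 n) {S T : Finset ℕ} (hS : S ⊆ A)
    (hT : T ⊆ Icc 1 n \ A) (hsep : ∀ x ∈ S, ∀ y ∈ T, y < x) (hsize : S.card + T.card = n - 1) :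
    IsNearTop n A.card A := by
  have hSA := card_le_card hS
  have hTA := card_le_card hT
  rw [card_Icc_sdiff hA] at hTA
  rcases hSA.eq_or_lt with hSA | hSA
  · left
    intro a ha
    have haS : a ∈ S := (eq_of_subset_of_card_le hS hSA.ge) ▸ ha
    have hTa : T ⊆ Ico 1 a := fun y hy =>
      mem_Ico.mpr ⟨(mem_Icc.mp (mem_sdiff.mp (hT hy)).1).1, hsep a haS y hy⟩
    have hcard := card_le_card hTa
    have := mem_Icc.mp (hA ha)
    simp only [Nat.card_Ico] at hcard
    rw [mem_Icc]
    omega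
  · right
    have hTeq : T = Icc 1 n \ A :=
      eq_of_subset_of_card_le hT (by rw [card_Icc_sdiff hA]; omega)
    intro z hz
    have hz := mem_Icc.mp hz
    by_contra hzA
    have hzT : z ∈ T := hTeq ▸ mem_sdiff.mpr ⟨mem_Icc.mpr ⟨by omega, hz.2⟩, hzA⟩
    have hSz : S ⊆ Ioc z n := fun x hx =>
      mem_Ioc.mpr ⟨hsep x hx z hzT, (mem_Icc.mp (hA (hS hx))).2⟩
    have := card_le_card hSz
    simp only [Nat.card_Ioc] at this
    omega

end NearTop

theorem IsPermWord.toFinset_eq {n : ℕ} {w : List ℕ} (h : IsPermWord n w) :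
    w.toFinset = Icc 1 n :=
  eq_of_subset_of_card_le (fun x hx => mem_Icc.mpr (h.2.2 x (List.mem_toFinset.mp hx)))
    (by rw [List.toFinset_card_of_nodup h.2.1, h.1, Nat.card_Icc, Nat.add_sub_cancel])

theorem hasAscentSeq_pair_iff {w : List ℕ} {a b : ℕ} :
    HasAscentSeq w [a, b] ↔ ∃ u v, w = u ++ v ∧ u.length = a ∧ v.length = b ∧
      u.IsChain (· > ·) ∧ v.IsChain (· > ·) ∧ ∃ x ∈ u.getLast?, ∃ y ∈ v.head?, x < y := by
  constructor
  · rintro ⟨bs, rfl, hlen, hruns, hjunc⟩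
    obtain ⟨u, v, rfl⟩ : ∃ u v, bs = [u, v] := by
      match bs, hlen with
      | [u, v], _ => exact ⟨u, v, rfl⟩
    simp only [List.map_cons, List.map_nil, List.cons.injEq, and_true] at hlen
    exact ⟨u, v, by simp, hlen.1, hlen.2, (hruns u (by simp)).2, (hruns v (by simp)).2,
      List.isChain_pair.mp hjunc⟩
  · rintro ⟨u, v, rfl, rfl, rfl, hu, hv, x, hx, y, hy, hxy⟩
    refine ⟨[u, v], by simp, rfl, fun b hb => ?_, List.isChain_pair.mpr ⟨x, hx, y, hy, hxy⟩⟩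
    rcases List.mem_pair.mp hb with rfl | rfl
    · exact ⟨fun h => by simp [h] at hx, hu⟩
    · exact ⟨fun h => by simp [h] at hy, hv⟩

def twoRunWord (n : ℕ) (A : Finset ℕ) : List ℕ :=
  A.sort (· ≥ ·) ++ (Icc 1 n \ A).sort (· ≥ ·)

section TwoRunWord

variable {n k : ℕ} {A : Finset ℕ}

theorem isPermWord_twoRunWord (hA : A ⊆ Icc 1 n) : IsPermWord n (twoRunWord n A) := by
  have hAn : A.card ≤ n := by simpa using card_le_card hA
  refine ⟨?_, ?_, fun x hx => ?_⟩
  · rw [twoRunWord, List.length_append, length_sort, length_sort, card_Icc_sdiff hA]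
    omega
  · rw [twoRunWord, List.nodup_append]
    refine ⟨sort_nodup _ _, sort_nodup _ _, fun x hx y hy => ?_⟩
    rintro rfl
    simp only [mem_sort, mem_sdiff] at hx hy
    exact hy.2 hx
  · simp only [twoRunWord, List.mem_append, mem_sort, mem_sdiff] at hx
    exact mem_Icc.mp (hx.elim (fun h => hA h) And.left)

theorem twoRunWord_injOn : Set.InjOn (twoRunWord n) {A | A.card = k} := by
  intro A hA B hB h
  have hsort := (List.append_inj h (by simp [hA.out, hB.out])).1
  rw [← sort_toFinset A (· ≥ ·), hsort, sort_toFinset]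

theorem isNearTop_iff_exists_sublist_twoRunWord (hA : A ⊆ Icc 1 n) (hk : 1 ≤ A.card)
    (hkn : A.card < n) :
    IsNearTop n A.card A ↔
      ∃ s : List ℕ, s.Sublist (twoRunWord n A) ∧ s.Pairwise (· > ·) ∧ s.length = n - 1 := by
  rw [twoRunWord, exists_sublist_sort_append_sort_iff]
  exact ⟨exists_separated_of_isNearTop hA hk hkn,
    fun ⟨_, hS, _, hT, hsep, hsize⟩ => isNearTop_of_separated hA hS hT hsep hsize⟩

theorem twoRunWord_mem_minimalPermsAsc (hA : A ⊆ Icc 1 n) (hk : 2 ≤ A.card) (hkn : A.card < n)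
    (hnt : ¬ IsNearTop n A.card A) :
    twoRunWord n A ∈ minimalPermsAsc n [A.card, n - A.card] := by
  have hperm := isPermWord_twoRunWord hA
  rw [isNearTop_iff_exists_sublist_twoRunWord hA (by omega) hkn] at hnt
  have hu := (sortedGT_sort A).pairwise.isChain
  have hv := (sortedGT_sort (Icc 1 n \ A)).pairwise.isChain
  -- otherwise the whole word is decreasing, and its tail is a decreasing sublist of length n - 1
  have hjunc : ∃ x ∈ (A.sort (· ≥ ·)).getLast?, ∃ y ∈ ((Icc 1 n \ A).sort (· ≥ ·)).head?,
      x < y := by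
    by_contra! h
    refine hnt ⟨(twoRunWord n A).tail, List.tail_sublist _, List.Pairwise.tail ?_,
      by rw [List.length_tail, hperm.1]⟩
    rw [← List.isChain_iff_pairwise, twoRunWord, List.isChain_append]
    refine ⟨hu, hv, fun x hx y hy => (h x hx y hy).lt_of_ne fun hxy => ?_⟩
    have hxA := (mem_sort _).mp (List.mem_of_mem_getLast? hx)
    have hyA := (mem_sort _).mp (List.mem_of_mem_head? hy)
    exact (mem_sdiff.mp hyA).2 (hxy ▸ hxA)
  have hdesc := card_descents_append_of_isChain_gt hu hv hjunc
  rw [← twoRunWord] at hdesc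
  refine ⟨hperm, (isMinimal_iff_forall_sublist hdesc (by rw [hperm.1]; omega)).mpr
    fun s hs hdec hlen => hnt ⟨s, hs, hdec, by rwa [hperm.1] at hlen⟩, ?_⟩
  exact hasAscentSeq_pair_iff.mpr
    ⟨_, _, rfl, length_sort _, by rw [length_sort, card_Icc_sdiff hA], hu, hv, hjunc⟩

theorem exists_twoRunWord_of_mem_minimalPermsAsc (hk : 2 ≤ k) (hkn : k < n) {w : List ℕ}
    (hw : w ∈ minimalPermsAsc n [k, n - k]) :
    ∃ A ⊆ Icc 1 n, A.card = k ∧ ¬ IsNearTop n k A ∧ twoRunWord n A = w := by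
  obtain ⟨hperm, hmin, hruns⟩ := hw
  obtain ⟨u, v, rfl, hul, -, hu, hv, hjunc⟩ := hasAscentSeq_pair_iff.mp hruns
  have hdu := List.isChain_iff_pairwise.mp hu
  have hdv := List.isChain_iff_pairwise.mp hv
  have hdisj : Disjoint u.toFinset v.toFinset :=
    List.disjoint_toFinset_iff_disjoint.mpr fun a hau hav =>
      (List.nodup_append.mp hperm.2.1).2.2 a hau a hav rfl
  have hvA : v.toFinset = Icc 1 n \ u.toFinset := by
    rw [← hperm.toFinset_eq, List.toFinset_append, union_sdiff_cancel_left hdisj]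
  have hA : u.toFinset ⊆ Icc 1 n := hperm.toFinset_eq ▸ by simp [List.toFinset_append]
  have hcard : u.toFinset.card = k := by
    rw [List.toFinset_card_of_nodup (hdu.imp ne_of_gt), hul]
  have hw : twoRunWord n u.toFinset = u ++ v := by
    rw [twoRunWord, hdu.sort_toFinset_ge, ← hvA, hdv.sort_toFinset_ge]
  refine ⟨u.toFinset, hA, hcard, fun hnt => ?_, hw⟩
  rw [← hcard, isNearTop_iff_exists_sublist_twoRunWord hA (by omega) (by omega), hw] at hnt
  obtain ⟨s, hs, hdec, hlen⟩ := hnt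
  have hdesc := card_descents_append_of_isChain_gt hu hv hjunc
  exact (isMinimal_iff_forall_sublist hdesc (by rw [hperm.1]; omega)).mp hmin s hs hdec
    (by rw [hperm.1]; exact hlen)

end TwoRunWord

theorem minimalPermsAsc_pair_eq {n k : ℕ} (hk : 2 ≤ k) (hkn : k < n) :
    minimalPermsAsc n [k, n - k] =
      ↑((((Icc 1 n).powersetCard k).filter (¬ IsNearTop n k ·)).image (twoRunWord n)) := by
  ext w
  simp only [coe_image, coe_filter, mem_powersetCard, Set.mem_image, Set.mem_ofPred_eq]
  constructor
  · intro hw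
    obtain ⟨A, hA, hcard, hnt, rfl⟩ := exists_twoRunWord_of_mem_minimalPermsAsc hk hkn hw
    exact ⟨A, ⟨⟨hA, hcard⟩, hnt⟩, rfl⟩
  · rintro ⟨A, ⟨⟨hA, rfl⟩, hnt⟩, rfl⟩
    exact twoRunWord_mem_minimalPermsAsc hA hk hkn hnt

theorem card_filter_isNearTop {n k : ℕ} (hk : 1 ≤ k) (hkn : k < n) :
    (((Icc 1 n).powersetCard k).filter (IsNearTop n k)).card = n := by
  set P := (Icc 1 n).powersetCard k
  have htop : Icc (n - k) n ⊆ Icc 1 n := Icc_subset_Icc (by omega) le_rfl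
  have hCtop : Icc (n - k + 2) n ⊆ Icc (n - k) n := Icc_subset_Icc (by omega) le_rfl
  have hC : (Icc (n - k + 2) n).card = k - 1 := by rw [Nat.card_Icc]; omega
  have hsub : P.filter (· ⊆ Icc (n - k) n) = (Icc (n - k) n).powersetCard k := by
    ext A
    simp only [P, mem_filter, mem_powersetCard]
    exact ⟨fun h => ⟨h.2, h.1.2⟩, fun h => ⟨⟨h.1.trans htop, h.2⟩, h.1⟩⟩
  have hunion := card_union_add_card_inter
    (P.filter (· ⊆ Icc (n - k) n)) (P.filter (Icc (n - k + 2) n ⊆ ·))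
  rw [← filter_or, ← filter_and, ← filter_filter, hsub,
    card_filter_powersetCard_subset _ _ _ hCtop (by omega),
    card_filter_powersetCard_subset _ _ _ (hCtop.trans htop) (by omega), card_powersetCard, hC,
    Nat.card_Icc, Nat.card_Icc, show n + 1 - (n - k) = k + 1 by omega,
    show k - (k - 1) = 1 by omega, Nat.choose_succ_self_right] at hunion
  simp only [Nat.choose_one_right] at hunion
  -- `hunion` : #near-top + 2 = (k + 1) + (n - k + 1)
  change (P.filter fun A => A ⊆ Icc (n - k) n ∨ Icc (n - k + 2) n ⊆ A).card = n
  omega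

theorem FCount_two_blocks_general (n k : ℕ) (hk1 : 2 ≤ k) (hk2 : k ≤ n - 2) :
    (FCount n [k, n - k] : ℤ) = (n.choose k : ℤ) - (n : ℤ) := by
  have hkn : k < n := by omega
  have hsplit := card_filter_add_card_filter_not (s := (Icc 1 n).powersetCard k) (IsNearTop n k)
  rw [card_filter_isNearTop (by omega) hkn, card_powersetCard, Nat.card_Icc,
    Nat.add_sub_cancel] at hsplit
  have hinj : Set.InjOn (twoRunWord n)
      ↑(((Icc 1 n).powersetCard k).filter (¬ IsNearTop n k ·)) :=
    twoRunWord_injOn.mono fun A hA => (mem_powersetCard.mp (mem_filter.mp hA).1).2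
  rw [FCount, minimalPermsAsc_pair_eq hk1 hkn, Set.ncard_coe_finset, card_image_of_injOn hinj]
  omega

/-- for `n ≥ 4` and `2 ≤ k ≤ n - 2`, `F_{k,n-k}(n) = binom(n,k) - n`. -/
theorem FCount_two_blocks (n k : ℕ) (hn : 4 ≤ n) (hk1 : 2 ≤ k) (hk2 : k ≤ n - 2) :
    (FCount n [k, n - k] : ℤ) = (n.choose k : ℤ) - (n : ℤ) :=
  FCount_two_blocks_general n k hk1 hk2
end
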